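/- Let ψ : R̃ × ℝ → ℙ(ℂ⁸) be defined by ψ(u, φ) = the projective class of (u₁e^{iπφ}, u₂e^{iπφ}, u₃e^{iπφ}, u₄e^{iπφ}, u₅, u₆, u₇, u₈). A point p in the image of ψ admits a representative vector all of whose coordinates are real if and only if p is the projective class of (the complexification of) some vector u ∈ R̃; in other words, the intersection of the image of ψ with the set of real points of ℙ(ℂ⁸) equals { [u] : u ∈ R̃ }. -/

import Mathlib

/-- The defining condition of `R̃ ⊂ ℝ⁸`:
`u₁² + ⋯ + u₈² = 1` and `u₁² + u₂² + u₃² + u₄² = u₅² + u₆² + u₇² + u₈²`. -/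
def RtildeCond (u : Fin 8 → ℝ) : Prop :=
  u 0 ^ 2 + u 1 ^ 2 + u 2 ^ 2 + u 3 ^ 2 + u 4 ^ 2 + u 5 ^ 2 + u 6 ^ 2 + u 7 ^ 2 = 1 ∧
  u 0 ^ 2 + u 1 ^ 2 + u 2 ^ 2 + u 3 ^ 2 = u 4 ^ 2 + u 5 ^ 2 + u 6 ^ 2 + u 7 ^ 2

/-- The vector `(u₁e^{iπφ}, u₂e^{iπφ}, u₃e^{iπφ}, u₄e^{iπφ}, u₅, u₆, u₇, u₈) ∈ ℂ⁸`. -/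
noncomputable def psiVec (u : Fin 8 → ℝ) (φ : ℝ) : Fin 8 → ℂ :=
  fun j => if (j : ℕ) < 4 then (u j : ℂ) * Complex.exp ((Real.pi * φ : ℝ) * Complex.I)
           else (u j : ℂ)

theorem psiVec_ne_zero (u : Fin 8 → ℝ) (hu : RtildeCond u) (φ : ℝ) : psiVec u φ ≠ 0 := by
  intro h
  have hz : ∀ j, u j = 0 := by
    intro j
    have hj := congrFun h j
    simp only [psiVec, Pi.zero_apply] at hj
    split_ifs at hj with hlt
    · rcases mul_eq_zero.mp hj with h' | h'
      · exact_mod_cast h'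
      · exact absurd h' (Complex.exp_ne_zero _)
    · exact_mod_cast hj
  have h1 := hu.1
  rw [hz 0, hz 1, hz 2, hz 3, hz 4, hz 5, hz 6, hz 7] at h1
  norm_num at h1

/-- The map `ψ : R̃ × ℝ → ℙ(ℂ⁸)`. -/
noncomputable def psi (u : Fin 8 → ℝ) (hu : RtildeCond u) (φ : ℝ) :
    Projectivization ℂ (Fin 8 → ℂ) :=
  Projectivization.mk ℂ (psiVec u φ) (psiVec_ne_zero u hu φ)

/-- The complexification of a real vector `u ∈ R̃`. -/
def cxVec (u : Fin 8 → ℝ) : Fin 8 → ℂ := fun j => (u j : ℂ)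

theorem cxVec_ne_zero (u : Fin 8 → ℝ) (hu : RtildeCond u) : cxVec u ≠ 0 := by
  intro h
  have hz : ∀ j, u j = 0 := by
    intro j
    have hj := congrFun h j
    simpa [cxVec] using hj
  have h1 := hu.1
  rw [hz 0, hz 1, hz 2, hz 3, hz 4, hz 5, hz 6, hz 7] at h1
  norm_num at h1

/-- The intersection of the image of `ψ` with the set of real points of `ℙ(ℂ⁸)`
(points admitting a representative vector all of whose coordinates are real)
equals `{ [u] : u ∈ R̃ }`. -/
theorem image_psi_inter_real_points :
    {p : Projectivization ℂ (Fin 8 → ℂ) |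
        (∃ (u : Fin 8 → ℝ) (hu : RtildeCond u) (φ : ℝ), psi u hu φ = p) ∧
        (∃ (v : Fin 8 → ℂ) (hv : v ≠ 0), (∀ j, (v j).im = 0) ∧
          Projectivization.mk ℂ v hv = p)} =
    {p : Projectivization ℂ (Fin 8 → ℂ) |
        ∃ (u : Fin 8 → ℝ) (hu : RtildeCond u),
          Projectivization.mk ℂ (cxVec u) (cxVec_ne_zero u hu) = p} := by
  ext p
  simp only [Set.mem_setOf_eq]
  constructor
  · rintro ⟨⟨u, hu, φ, hpsi⟩, v, hv, hvre, hvp⟩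
    -- relate psiVec to v
    have hmk : Projectivization.mk ℂ (psiVec u φ) (psiVec_ne_zero u hu φ) =
        Projectivization.mk ℂ v hv := by
      rw [hvp]; exact hpsi
    obtain ⟨a, ha⟩ := (Projectivization.mk_eq_mk_iff ℂ _ _ _ _).mp hmk
    set E : ℂ := Complex.exp ((Real.pi * φ : ℝ) * Complex.I) with hE
    -- nonzero coordinates in each half
    have hhalf : u 0 ^ 2 + u 1 ^ 2 + u 2 ^ 2 + u 3 ^ 2 = 1/2 := by
      have := hu.1; have := hu.2; linarith
    have hj1 : ∃ j : Fin 8, (j : ℕ) < 4 ∧ u j ≠ 0 := by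
      by_contra h; push_neg at h
      have h0 := h 0 (by decide); have h1 := h 1 (by decide)
      have h2 := h 2 (by decide); have h3 := h 3 (by decide)
      rw [h0, h1, h2, h3] at hhalf; norm_num at hhalf
    have hj0 : ∃ j : Fin 8, ¬ (j : ℕ) < 4 ∧ u j ≠ 0 := by
      by_contra h; push_neg at h
      have h4 := h 4 (by decide); have h5 := h 5 (by decide)
      have h6 := h 6 (by decide); have h7 := h 7 (by decide)
      have := hu.2
      rw [h4, h5, h6, h7] at this
      rw [this] at hhalf; norm_num at hhalf
    obtain ⟨j1, hj1lt, hj1ne⟩ := hj1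
    obtain ⟨j0, hj0ge, hj0ne⟩ := hj0
    -- coordinatewise equations
    have heq0 : (u j0 : ℂ) = (a : ℂ) * v j0 := by
      have := congrFun ha j0
      simp only [Pi.smul_apply, smul_eq_mul, psiVec, if_neg hj0ge] at this
      exact this.symm
    have heq1 : (u j1 : ℂ) * E = (a : ℂ) * v j1 := by
      have := congrFun ha j1
      simp only [Pi.smul_apply, smul_eq_mul, psiVec, if_pos hj1lt] at this
      exact this.symm
    -- a is real
    have hvj0 : v j0 ≠ 0 := by
      intro h0; rw [h0, mul_zero] at heq0
      exact hj0ne (by exact_mod_cast heq0)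
    have hvj0re : (v j0).re ≠ 0 := by
      intro h0
      apply hvj0
      exact Complex.ext h0 (hvre j0)
    have haim : (a : ℂ).im = 0 := by
      have him := congrArg Complex.im heq0
      simp [Complex.mul_im, hvre j0] at him
      rcases him with h | h
      · exact h
      · exact absurd h hvj0re
    -- E is real
    have hEim : E.im = 0 := by
      have him := congrArg Complex.im heq1
      simp [Complex.mul_im, hvre j1, haim, Complex.ofReal_im] at him
      rcases him with h | h
      · exact absurd h hj1ne
      · exact h
    have hEabs : ‖E‖ = 1 := by
      rw [hE]; exact Complex.norm_exp_ofReal_mul_I _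
    have hEre2 : E.re ^ 2 = 1 := by
      have := Complex.sq_norm E
      rw [hEabs, Complex.normSq_apply, hEim] at this
      nlinarith
    set ε : ℝ := E.re with hε
    have hEeq : E = (ε : ℂ) := Complex.ext rfl (by simp [hEim])
    -- the new real vector
    set u' : Fin 8 → ℝ := fun j => if (j : ℕ) < 4 then ε * u j else u j with hu'
    have hsq : ∀ x : ℝ, (ε * x) ^ 2 = x ^ 2 := by
      intro x; rw [mul_pow, hEre2, one_mul]
    have hu'cond : RtildeCond u' := by
      constructor
      · simpa only [hu', show ((0:Fin 8):ℕ) < 4 by decide, show ((1:Fin 8):ℕ) < 4 by decide,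
          show ((2:Fin 8):ℕ) < 4 by decide, show ((3:Fin 8):ℕ) < 4 by decide,
          show ¬((4:Fin 8):ℕ) < 4 by decide, show ¬((5:Fin 8):ℕ) < 4 by decide,
          show ¬((6:Fin 8):ℕ) < 4 by decide, show ¬((7:Fin 8):ℕ) < 4 by decide,
          if_true, if_false, hsq] using hu.1
      · simpa only [hu', show ((0:Fin 8):ℕ) < 4 by decide, show ((1:Fin 8):ℕ) < 4 by decide,
          show ((2:Fin 8):ℕ) < 4 by decide, show ((3:Fin 8):ℕ) < 4 by decide,
          show ¬((4:Fin 8):ℕ) < 4 by decide, show ¬((5:Fin 8):ℕ) < 4 by decide,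
          show ¬((6:Fin 8):ℕ) < 4 by decide, show ¬((7:Fin 8):ℕ) < 4 by decide,
          if_true, if_false, hsq] using hu.2
    refine ⟨u', hu'cond, ?_⟩
    have hvec : cxVec u' = psiVec u φ := by
      funext j
      simp only [cxVec, hu', psiVec]
      split_ifs with hjlt
      · rw [← hE, hEeq]; push_cast; ring
      · rfl
    rw [← hpsi]
    unfold psi
    congr 1
  · rintro ⟨u, hu, hp⟩
    refine ⟨⟨u, hu, 0, ?_⟩, cxVec u, cxVec_ne_zero u hu, fun j => by simp [cxVec], hp⟩
    have hvec : psiVec u 0 = cxVec u := by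
      funext j
      simp [psiVec, cxVec]
    rw [← hp]
    unfold psi
    congr 1
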